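/- Let (A, ‖·‖) be a seminormed ring and let φ be a seminorm on A that is continuous with respect to the topology defined by ‖·‖. Suppose there exists a topologically nilpotent unit ϖ ∈ A^× that is multiplicative for both ‖·‖ and φ, i.e. ‖ϖf‖ = ‖ϖ‖·‖f‖ and φ(ϖf) = φ(ϖ)·φ(f) for all f ∈ A. Then there exist real numbers s > 0 and C > 0 such that φ(f)^s ≤ C·‖f‖ for all f ∈ A; that is, the seminorm φ^s is bounded with respect to ‖·‖. -/

import Mathlib

open Filter Topology

/-! Put `a = ‖ϖ‖` and `b = φ ϖ`; both lie in `(0, 1)` because `ϖ` is a unit and `ϖ ^ n → 0`.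
Continuity of `φ` at `0` gives `δ > 0` with `φ < 1` on the `δ`-ball. Multiplying by a power
`ϖ ^ n` (`n ∈ ℤ`) moves any `f` with `‖f‖ > 0` into the shell `δ a ≤ ‖ϖ ^ n f‖ < δ`, so
`φ f < b ^ (-n)`; with `s = log_b a` this becomes `φ f ^ s < a ^ (-n) ≤ ‖f‖ / (δ a)`.
If `‖f‖ = 0`, every `n` is admissible, which forces `φ f = 0`. -/

structure IsRingSeminormFun {A : Type*} [CommRing A] (φ : A → ℝ) : Prop where
  nonneg : ∀ f, 0 ≤ φ f
  map_zero : φ 0 = 0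
  map_one : φ 1 = 1
  map_neg : ∀ f, φ (-f) = φ f
  nonarch : ∀ f g, φ (f + g) ≤ max (φ f) (φ g)
  submul : ∀ f g, φ (f * g) ≤ φ f * φ g

theorem apply_units_zpow_mul {M : Type*} [Monoid M] {ψ : M → ℝ} (u : Mˣ) {c : ℝ}
    (hc : c ≠ 0) (h : ∀ f, ψ (u * f) = c * ψ f) (n : ℤ) (f : M) :
    ψ (↑(u ^ n) * f) = c ^ n * ψ f := by
  induction n using Int.induction_on with
  | zero => simp
  | succ k ih =>
    rw [add_comm, zpow_one_add, Units.val_mul, mul_assoc, h, ih, zpow_one_add₀ hc,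
      mul_assoc]
  | pred k ih =>
    have h' := h (↑(u ^ (-(k : ℤ) - 1)) * f)
    rw [← mul_assoc, ← Units.val_mul, ← zpow_one_add, add_sub_cancel, ih] at h'
    rw [zpow_sub_one₀ hc, mul_right_comm, h', mul_comm c, mul_inv_cancel_right₀ hc]

theorem pos_of_apply_units_mul {M : Type*} [Monoid M] {ψ : M → ℝ} (u : Mˣ) {c : ℝ}
    (hψ : ∀ f, 0 ≤ ψ f) (h1 : ψ 1 = 1) (h : ∀ f, ψ (u * f) = c * ψ f) : 0 < c := by
  refine pos_of_mul_pos_left (b := ψ ↑u⁻¹) ?_ (hψ _)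
  rw [← h, Units.mul_inv, h1]
  exact one_pos

theorem lt_one_of_apply_units_mul {M : Type*} [MonoidWithZero M] [TopologicalSpace M]
    {ψ : M → ℝ} (u : Mˣ) {c : ℝ} (hc : 0 < c) (h1 : ψ 1 = 1) (hψ : Tendsto ψ (𝓝 0) (𝓝 0))
    (h : ∀ f, ψ (u * f) = c * ψ f) (hu : Tendsto (fun n : ℕ => (u : M) ^ n) atTop (𝓝 0)) :
    c < 1 := by
  have hpow : ψ ∘ (fun n : ℕ => (u : M) ^ n) = fun n => c ^ n := by
    ext n
    simpa [h1] using apply_units_zpow_mul u hc.ne' h n 1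
  have := hψ.comp hu
  rw [hpow, tendsto_pow_atTop_nhds_zero_iff] at this
  exact lt_of_abs_lt this

section

variable {M : Type*} [Monoid M] (u : Mˣ) {φ ψ : M → ℝ} {a b δ : ℝ}

theorem apply_lt_zpow_of_zpow_mul_lt (ha : a ≠ 0) (hb : 0 < b)
    (hψu : ∀ f, ψ (u * f) = a * ψ f) (hφu : ∀ f, φ (u * f) = b * φ f)
    (hsmall : ∀ g, ψ g < δ → φ g < 1) {f : M} {n : ℤ} (hf : a ^ n * ψ f < δ) :
    φ f < b ^ (-n) := by
  have hg : φ (↑(u ^ n) * f) < 1 := hsmall _ (by rwa [apply_units_zpow_mul u ha hψu])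
  have hf_eq : φ f = b ^ (-n) * φ (↑(u ^ n) * f) := by
    rw [← apply_units_zpow_mul u hb.ne' hφu, ← mul_assoc, ← Units.val_mul, ← zpow_add,
      neg_add_cancel, zpow_zero, Units.val_one, one_mul]
  rw [hf_eq]
  exact mul_lt_of_lt_one_right (zpow_pos hb _) hg

theorem apply_eq_zero_of_apply_eq_zero (hφ0 : ∀ f, 0 ≤ φ f) (ha : a ≠ 0) (hb0 : 0 < b)
    (hb1 : b < 1) (hδ : 0 < δ) (hψu : ∀ f, ψ (u * f) = a * ψ f)
    (hφu : ∀ f, φ (u * f) = b * φ f) (hsmall : ∀ g, ψ g < δ → φ g < 1) {f : M}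
    (hf : ψ f = 0) : φ f = 0 := by
  have hφf (k : ℕ) : φ f ≤ b ^ k := by
    simpa using (apply_lt_zpow_of_zpow_mul_lt u ha hb0 hψu hφu hsmall
      (n := -k) (by rwa [hf, mul_zero])).le
  exact le_antisymm (ge_of_tendsto' (tendsto_pow_atTop_nhds_zero_of_lt_one hb0.le hb1) hφf)
    (hφ0 f)

theorem rpow_logb_le_of_apply_units_mul (hφ0 : ∀ f, 0 ≤ φ f) (hψ0 : ∀ f, 0 ≤ ψ f)
    (ha0 : 0 < a) (ha1 : a < 1) (hb0 : 0 < b) (hb1 : b < 1) (hδ : 0 < δ)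
    (hψu : ∀ f, ψ (u * f) = a * ψ f) (hφu : ∀ f, φ (u * f) = b * φ f)
    (hsmall : ∀ g, ψ g < δ → φ g < 1) (f : M) :
    φ f ^ Real.logb b a ≤ (δ * a)⁻¹ * ψ f := by
  have hs : 0 < Real.logb b a := Real.logb_pos_of_base_lt_one hb0 hb1 ha0 ha1
  rcases (hψ0 f).eq_or_lt with hψf | hψf
  · rw [apply_eq_zero_of_apply_eq_zero u hφ0 ha0.ne' hb0 hb1 hδ hψu hφu hsmall hψf.symm,
      Real.zero_rpow hs.ne', ← hψf, mul_zero]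
  obtain ⟨n, hn_le, hn_lt⟩ :=
    exists_mem_Ico_zpow (div_pos hψf hδ) ((one_lt_inv₀ ha0).mpr ha1)
  have hφf : φ f < b ^ (-(n + 1)) := by
    refine apply_lt_zpow_of_zpow_mul_lt u ha0.ne' hb0 hψu hφu hsmall ?_
    rw [inv_zpow', div_lt_iff₀ hδ] at hn_lt
    have := mul_lt_mul_of_pos_left hn_lt (zpow_pos ha0 (n + 1))
    rwa [← mul_assoc, ← zpow_add₀ ha0.ne', add_neg_cancel, zpow_zero, one_mul] at this
  calc φ f ^ Real.logb b a ≤ (b ^ (-(n + 1))) ^ Real.logb b a :=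
        Real.rpow_le_rpow (hφ0 f) hφf.le hs.le
    _ = a⁻¹ ^ n * a⁻¹ := by
        rw [← Real.rpow_zpow_comm hb0.le, Real.rpow_logb hb0 hb1.ne ha0, ← inv_zpow',
          zpow_add_one₀ (inv_ne_zero ha0.ne')]
    _ ≤ ψ f / δ * a⁻¹ := by gcongr
    _ = (δ * a)⁻¹ * ψ f := by ring

end

theorem pow_of_continuous_seminorm_bounded {A : Type*} [SeminormedCommRing A]
    [NormOneClass A]
    (φ : A → ℝ) (hφ : IsRingSeminormFun φ) (hφcont : Continuous φ)
    (ϖ : A) (hϖunit : IsUnit ϖ)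
    (hϖnil : Tendsto (fun n : ℕ => ϖ ^ n) atTop (nhds 0))
    (hϖnorm : ∀ f : A, ‖ϖ * f‖ = ‖ϖ‖ * ‖f‖)
    (hϖφ : ∀ f : A, φ (ϖ * f) = φ ϖ * φ f) :
    ∃ s : ℝ, 0 < s ∧ ∃ C : ℝ, 0 < C ∧ ∀ f : A, (φ f) ^ s ≤ C * ‖f‖ := by
  obtain ⟨u, rfl⟩ := hϖunit
  have hφ_tendsto : Tendsto φ (𝓝 0) (𝓝 0) := hφcont.tendsto' 0 0 hφ.map_zero
  have ha0 : 0 < ‖(u : A)‖ := pos_of_apply_units_mul u norm_nonneg norm_one hϖnorm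
  have hb0 : 0 < φ u := pos_of_apply_units_mul u hφ.nonneg hφ.map_one hϖφ
  have ha1 : ‖(u : A)‖ < 1 :=
    lt_one_of_apply_units_mul u ha0 norm_one tendsto_norm_zero hϖnorm hϖnil
  have hb1 : φ u < 1 := lt_one_of_apply_units_mul u hb0 hφ.map_one hφ_tendsto hϖφ hϖnil
  obtain ⟨δ, hδ, hsmall⟩ : ∃ δ > 0, ∀ g : A, ‖g‖ < δ → φ g < 1 := by
    simpa only [Metric.eventually_nhds_iff, dist_zero_right] using
      hφ_tendsto.eventually_lt_const one_pos
  exact ⟨_, Real.logb_pos_of_base_lt_one hb0 hb1 ha0 ha1, _, by positivity,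
    rpow_logb_le_of_apply_units_mul u hφ.nonneg norm_nonneg ha0 ha1 hb0 hb1 hδ hϖnorm hϖφ
      hsmall⟩
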